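/- arXiv:2305.11135 — 2 statements merged into one kernel-verified Lean document; each statement's English description precedes it below -/
import Mathlib

section
/- Let d ≥ 1 be an integer, let x ∈ ℝ^d, let k be an integer with 1 ≤ k ≤ d, and let S ⊆ {1,…,d} be a top-k support of x. Then the squared Euclidean norm of the discarded part satisfies ∑_{j ∉ S} x_j² ≤ (1 − k/d) · ∑_{j=1}^d x_j²; equivalently, ‖x − Top_k(x)‖² ≤ (1 − k/d)‖x‖², where ‖·‖ denotes the Euclidean norm. -/
open Finset

/-
Each of the `#s` retained entries dominates each of the `#sᶜ` discarded ones, so comparing the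
double sum over `s × sᶜ` gives `#s · ∑_{sᶜ} f ≤ #sᶜ · ∑_s f`; adding `#sᶜ · ∑_{sᶜ} f` to both
sides turns this into `∑_{sᶜ} f ≤ (#sᶜ / n) · ∑ f = (1 - #s / n) · ∑ f` with `n = #s + #sᶜ`.
-/

section TopK

variable {ι : Type*} [Fintype ι] [DecidableEq ι]

theorem card_mul_sum_compl_le_card_compl_mul_sum {R : Type*} [Semiring R] [PartialOrder R]
    [IsOrderedAddMonoid R] (s : Finset ι) (f : ι → R) (hf : ∀ i ∈ s, ∀ j ∉ s, f j ≤ f i) :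
    (#s : R) * ∑ j ∈ sᶜ, f j ≤ (#sᶜ : R) * ∑ i ∈ s, f i := by
  calc (#s : R) * ∑ j ∈ sᶜ, f j = ∑ i ∈ s, ∑ j ∈ sᶜ, f j := by
        rw [sum_const, nsmul_eq_mul]
    _ ≤ ∑ i ∈ s, ∑ j ∈ sᶜ, f i :=
        sum_le_sum fun i hi => sum_le_sum fun j hj => hf i hi j (mem_compl.mp hj)
    _ = (#sᶜ : R) * ∑ i ∈ s, f i := by
        rw [sum_comm, sum_const, nsmul_eq_mul]

theorem sum_compl_le_one_sub_card_div_mul_sum {K : Type*} [Field K] [LinearOrder K]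
    [IsStrictOrderedRing K] (s : Finset ι) (f : ι → K) (hf : ∀ i ∈ s, ∀ j ∉ s, f j ≤ f i) :
    ∑ j ∈ sᶜ, f j ≤ (1 - (#s : K) / Fintype.card ι) * ∑ j, f j := by
  have hcard : (Fintype.card ι : K) = #s + #sᶜ := by
    rw [← Nat.cast_add, card_add_card_compl]
  rcases isEmpty_or_nonempty ι with _ | _
  · simp [eq_empty_of_isEmpty sᶜ]
  have hpos : (0 : K) < Fintype.card ι := by exact_mod_cast Fintype.card_pos
  rw [one_sub_div hpos.ne', div_mul_eq_mul_div, le_div_iff₀ hpos, ← sum_add_sum_compl s f, hcard]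
  linear_combination card_mul_sum_compl_le_card_compl_mul_sum s f hf

theorem EuclideanSpace.norm_sub_sq_eq_sum_compl (S : Finset ι) (x y : EuclideanSpace ℝ ι)
    (hy : ∀ i, y i = if i ∈ S then x i else 0) :
    ‖x - y‖ ^ 2 = ∑ j ∈ Sᶜ, x j ^ 2 := by
  rw [EuclideanSpace.real_norm_sq_eq, ← sum_add_sum_compl S]
  have hS : ∀ j ∈ S, (x - y) j ^ 2 = 0 := fun j hj => by simp [hy j, hj]
  have hSc : ∀ j ∈ Sᶜ, (x - y) j ^ 2 = x j ^ 2 := fun j hj => by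
    simp [hy j, mem_compl.mp hj]
  rw [sum_congr rfl hS, sum_congr rfl hSc, sum_const_zero, zero_add]

end TopK

theorem topk_contraction_general
    (d : ℕ) (x : EuclideanSpace ℝ (Fin d))
    (k : ℕ)
    (S : Finset (Fin d)) (hScard : S.card = k)
    (hStop : ∀ i ∈ S, ∀ j ∉ S, |x j| ≤ |x i|)
    (topk : EuclideanSpace ℝ (Fin d))
    (htopk : ∀ i, topk i = if i ∈ S then x i else 0) :
    (∑ j ∈ Sᶜ, (x j) ^ 2 ≤ (1 - (k : ℝ) / d) * ∑ j, (x j) ^ 2) ∧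
      ‖x - topk‖ ^ 2 ≤ (1 - (k : ℝ) / d) * ‖x‖ ^ 2 := by
  have hsum : ∑ j ∈ Sᶜ, (x j) ^ 2 ≤ (1 - (k : ℝ) / d) * ∑ j, (x j) ^ 2 := by
    have h := sum_compl_le_one_sub_card_div_mul_sum S (fun i => x i ^ 2)
      fun i hi j hj => sq_le_sq.mpr (hStop i hi j hj)
    rwa [hScard, Fintype.card_fin] at h
  refine ⟨hsum, ?_⟩
  rwa [EuclideanSpace.norm_sub_sq_eq_sum_compl S x topk htopk, EuclideanSpace.real_norm_sq_eq]

theorem topk_contraction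
    (d : ℕ) (hd : 1 ≤ d) (x : EuclideanSpace ℝ (Fin d))
    (k : ℕ) (hk1 : 1 ≤ k) (hkd : k ≤ d)
    (S : Finset (Fin d)) (hScard : S.card = k)
    (hStop : ∀ i ∈ S, ∀ j ∉ S, |x j| ≤ |x i|)
    (topk : EuclideanSpace ℝ (Fin d))
    (htopk : ∀ i, topk i = if i ∈ S then x i else 0) :
    (∑ j ∈ Sᶜ, (x j) ^ 2 ≤ (1 - (k : ℝ) / d) * ∑ j, (x j) ^ 2) ∧
      ‖x - topk‖ ^ 2 ≤ (1 - (k : ℝ) / d) * ‖x‖ ^ 2 :=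
  topk_contraction_general d x k S hScard hStop topk htopk
end

section
/- Let d ≥ 1, let λ ∈ (0,1], and let Comp : ℝ^d → ℝ^d be any map satisfying the λ-contraction property ‖x − Comp(x)‖² ≤ (1 − λ)‖x‖² for all x ∈ ℝ^d. Let Q ≥ 1 be an integer, let G > 0, ξ > 0, and let a > 4Q/λ, and set η_t = ξ/(a + t) for t = 0, 1, 2, …. Let (Δ_t)_{t≥0} be any sequence in ℝ^d with ‖Δ_t‖ ≤ η_t Q G for all t, and define the memory sequence by m_0 = 0 and m_{t+1} = (m_t + Δ_t) − Comp(m_t + Δ_t). Then there exists a constant C with C ≥ 4aλ(1 − λ²)/(aλ − 4Q) such that for all t ≥ 0, ‖m_t‖² ≤ 4 (η_t)² C Q² G² / λ². -/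
/-!
Since `(1 - λ)` is at most `(1 - λ/2)²`, the compressor error satisfies `‖x - Comp x‖ ≤ (1 - λ/2) ‖x‖`,
so `‖m_{t+1}‖ ≤ (1 - λ/2) (‖m_t‖ + η_t Q G)`. By induction `‖m_t‖ ≤ η_t B` with `B = 2 √C Q G / λ`:
the contraction factor `1 - λ/2` beats the growth `η_t / η_{t+1} = 1 + 1/(a + t) ≤ 1 + λ/4`
(here `a > 4Q/λ` is used) as soon as `λ B ≥ 4 Q G`, i.e. `C ≥ 4`; so
`C = max 4 (4aλ(1 - λ²)/(aλ - 4Q))` works.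
-/

theorem norm_sub_le_of_sq_le {E : Type*} [SeminormedAddCommGroup E] {x y : E} {lam : ℝ}
    (hlam : lam ≤ 2) (h : ‖x - y‖ ^ 2 ≤ (1 - lam) * ‖x‖ ^ 2) :
    ‖x - y‖ ≤ (1 - lam / 2) * ‖x‖ := by
  have hρ : 0 ≤ (1 - lam / 2) * ‖x‖ := mul_nonneg (by linarith) (norm_nonneg x)
  refine (pow_le_pow_iff_left₀ (norm_nonneg _) hρ two_ne_zero).mp ?_
  calc ‖x - y‖ ^ 2 ≤ (1 - lam) * ‖x‖ ^ 2 := h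
    _ ≤ (1 - lam / 2) ^ 2 * ‖x‖ ^ 2 := by nlinarith [sq_nonneg lam, sq_nonneg ‖x‖]
    _ = ((1 - lam / 2) * ‖x‖) ^ 2 := by ring

theorem norm_le_mul_of_contracting_recursion {E : Type*} [SeminormedAddCommGroup E] {Comp : E → E}
    {ρ B D : ℝ} {η : ℕ → ℝ} {m Δ : ℕ → E}
    (hComp : ∀ x, ‖x - Comp x‖ ≤ ρ * ‖x‖) (hρ : 0 ≤ ρ)
    (hΔ : ∀ t, ‖Δ t‖ ≤ η t * D) (hstep : ∀ t, ρ * (η t * B + η t * D) ≤ η (t + 1) * B)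
    (hm0 : ‖m 0‖ ≤ η 0 * B) (hmrec : ∀ t, m (t + 1) = (m t + Δ t) - Comp (m t + Δ t)) :
    ∀ t, ‖m t‖ ≤ η t * B := by
  intro t
  induction t with
  | zero => exact hm0
  | succ t ih =>
    calc ‖m (t + 1)‖ ≤ ρ * ‖m t + Δ t‖ := hmrec t ▸ hComp _
      _ ≤ ρ * (η t * B + η t * D) := by
          gcongr
          exact (norm_add_le _ _).trans (add_le_add ih (hΔ t))
      _ ≤ η (t + 1) * B := hstep t

theorem one_sub_half_mul_le_div_add_one {lam s ξ B D : ℝ} (hlam0 : 0 < lam) (hlam2 : lam ≤ 2)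
    (hs : 4 ≤ lam * s) (hξ : 0 ≤ ξ) (hD : 0 ≤ D) (hDB : 4 * D ≤ lam * B) :
    (1 - lam / 2) * (ξ / s * B + ξ / s * D) ≤ ξ / (s + 1) * B := by
  have hs0 : 0 < s := pos_of_mul_pos_right (by linarith) hlam0.le
  have hB : 0 ≤ B := by nlinarith
  have key : (1 - lam / 2) * (B + D) * (s + 1) ≤ B * s := by
    have h1 : s + 1 ≤ (1 + lam / 4) * s := by linarith
    have h2 : (1 - lam / 4) * (B + D) ≤ B := by nlinarith
    calc (1 - lam / 2) * (B + D) * (s + 1)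
        ≤ (1 - lam / 2) * (B + D) * ((1 + lam / 4) * s) :=
          mul_le_mul_of_nonneg_left h1 (mul_nonneg (by linarith) (by linarith))
      _ = (1 - lam / 4 - lam ^ 2 / 8) * ((B + D) * s) := by ring
      _ ≤ (1 - lam / 4) * ((B + D) * s) := by gcongr ?_ * _; nlinarith [sq_nonneg lam]
      _ = (1 - lam / 4) * (B + D) * s := by ring
      _ ≤ B * s := by gcongr
  calc (1 - lam / 2) * (ξ / s * B + ξ / s * D) = ξ * ((1 - lam / 2) * (B + D) / s) := by ring
    _ ≤ ξ * (B / (s + 1)) := by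
        gcongr ξ * ?_
        rw [div_le_div_iff₀ hs0 (by linarith)]
        exact key
    _ = ξ / (s + 1) * B := by ring

theorem memory_contraction_general
    (d : ℕ)
    (lam : ℝ) (hlam0 : 0 < lam) (hlam1 : lam ≤ 1)
    (Comp : EuclideanSpace ℝ (Fin d) → EuclideanSpace ℝ (Fin d))
    (hComp : ∀ x : EuclideanSpace ℝ (Fin d), ‖x - Comp x‖ ^ 2 ≤ (1 - lam) * ‖x‖ ^ 2)
    (Q : ℕ) (hQ : 1 ≤ Q) (G ξ a : ℝ) (hG : 0 < G) (hξ : 0 < ξ)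
    (ha : a > 4 * Q / lam)
    (η : ℕ → ℝ) (hη : ∀ t, η t = ξ / (a + t))
    (Δ : ℕ → EuclideanSpace ℝ (Fin d)) (hΔ : ∀ t, ‖Δ t‖ ≤ η t * Q * G)
    (m : ℕ → EuclideanSpace ℝ (Fin d)) (hm0 : m 0 = 0)
    (hmrec : ∀ t, m (t + 1) = (m t + Δ t) - Comp (m t + Δ t)) :
    ∃ C : ℝ, C ≥ 4 * a * lam * (1 - lam ^ 2) / (a * lam - 4 * Q) ∧
      ∀ t, ‖m t‖ ^ 2 ≤ 4 * (η t) ^ 2 * C * Q ^ 2 * G ^ 2 / lam ^ 2 := by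
  set C := max 4 (4 * a * lam * (1 - lam ^ 2) / (a * lam - 4 * Q))
  set B := 2 * √C * (Q * G) / lam
  have hsqrtC : 2 ≤ √C := (Real.le_sqrt zero_le_two (by positivity)).mpr (by norm_num [C])
  have hDB : 4 * (Q * G) ≤ lam * B := by
    rw [show lam * B = 2 * √C * (Q * G) by simp only [B]; field_simp]
    nlinarith [mul_pos (Nat.cast_pos.mpr hQ) hG]
  have hla : 4 ≤ lam * a := by
    have hQ1 : (1 : ℝ) ≤ Q := by exact_mod_cast hQ
    nlinarith [(div_lt_iff₀ hlam0).mp ha]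
  have hbound : ∀ t, ‖m t‖ ≤ η t * B := by
    refine norm_le_mul_of_contracting_recursion (fun x ↦ norm_sub_le_of_sq_le (by linarith) (hComp x))
      (by linarith) (fun t ↦ by rw [← mul_assoc]; exact hΔ t) (fun t ↦ ?_) ?_ hmrec
    · rw [hη, hη, Nat.cast_succ, ← add_assoc]
      exact one_sub_half_mul_le_div_add_one hlam0 (by linarith)
        (by nlinarith [(Nat.cast_nonneg t : (0 : ℝ) ≤ t)]) hξ.le (by positivity) hDB
    · rw [hm0, norm_zero, hη]
      have : 0 < a := by nlinarith
      positivity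
  refine ⟨C, le_max_right _ _, fun t ↦ ?_⟩
  calc ‖m t‖ ^ 2 ≤ (η t * B) ^ 2 := pow_le_pow_left₀ (norm_nonneg _) (hbound t) 2
    _ = 4 * (η t) ^ 2 * C * Q ^ 2 * G ^ 2 / lam ^ 2 := by
        rw [mul_pow, div_pow, mul_pow, mul_pow, Real.sq_sqrt (by positivity)]
        ring

theorem memory_contraction
    (d : ℕ) (hd : 1 ≤ d)
    (lam : ℝ) (hlam0 : 0 < lam) (hlam1 : lam ≤ 1)
    (Comp : EuclideanSpace ℝ (Fin d) → EuclideanSpace ℝ (Fin d))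
    (hComp : ∀ x : EuclideanSpace ℝ (Fin d), ‖x - Comp x‖ ^ 2 ≤ (1 - lam) * ‖x‖ ^ 2)
    (Q : ℕ) (hQ : 1 ≤ Q) (G ξ a : ℝ) (hG : 0 < G) (hξ : 0 < ξ)
    (ha : a > 4 * Q / lam)
    (η : ℕ → ℝ) (hη : ∀ t, η t = ξ / (a + t))
    (Δ : ℕ → EuclideanSpace ℝ (Fin d)) (hΔ : ∀ t, ‖Δ t‖ ≤ η t * Q * G)
    (m : ℕ → EuclideanSpace ℝ (Fin d)) (hm0 : m 0 = 0)
    (hmrec : ∀ t, m (t + 1) = (m t + Δ t) - Comp (m t + Δ t)) :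
    ∃ C : ℝ, C ≥ 4 * a * lam * (1 - lam ^ 2) / (a * lam - 4 * Q) ∧
      ∀ t, ‖m t‖ ^ 2 ≤ 4 * (η t) ^ 2 * C * Q ^ 2 * G ^ 2 / lam ^ 2 :=
  memory_contraction_general d lam hlam0 hlam1 Comp hComp Q hQ G ξ a hG hξ ha η hη Δ hΔ m hm0 hmrec
end
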